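/- For the one-dimensional Gaussian mechanism M(x) = f(x) + N(0, σ²) with |f(x) − f(x')| ≤ Δ for all x, x', if σ ≥ Δ·√(2·ln(1.25/δ))/ε with ε ∈ (0,1), then M is (ε, δ)-DP. -/

import Mathlib

/-! With `a = μ - μ'`, the density of `N(μ, v)` is `exp ((a (t - μ) + a² / 2) / v)` times that of
`N(μ', v)`, so it is at most `e^ε` times it outside the bad set `{t | ε v - a² / 2 < a (t - μ)}`.
Under `N(μ, v)` the variable `a (t - μ)` is `N(0, a² v)`, so the bad set has the probability of a
Gaussian tail beyond `c = ε v - a² / 2`. If `c ≥ 0`, comparing densities with `N(c, a² v)` on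
`[c, ∞)` bounds the tail by `exp (-c² / (2 a² v)) / 2`, and the calibration
`2 a² log (1.25 / δ) ≤ ε² v` turns this into `e^(ε/2) · (2/5) δ ≤ δ`. If `c < 0`, the calibration
forces `log (1.25 / δ) < ε / 4`, hence `δ ≥ 9/10`, while (for `δ < 1`) `c` is within one standard
deviation below the mean, where the tail is at most `1/2 + 1/√(2π) ≤ 9/10`. -/

open MeasureTheory ProbabilityTheory Real Set
open scoped NNReal ENNReal

section WithDensity

variable {α : Type*} [MeasurableSpace α] {ν : Measure α} [SFinite ν] {f g : α → ℝ≥0∞} {c : ℝ≥0∞}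

lemma withDensity_apply_le_mul_of_forall_le (hg : Measurable g) {s : Set α}
    (h : ∀ t ∈ s, f t ≤ c * g t) : ν.withDensity f s ≤ c * ν.withDensity g s := by
  rw [withDensity_apply' _ s, withDensity_apply' _ s, ← lintegral_const_mul _ hg]
  exact setLIntegral_mono (hg.const_mul c) h

lemma withDensity_apply_le_mul_add_of_forall_notMem_le (hg : Measurable g) {B : Set α}
    (h : ∀ t ∉ B, f t ≤ c * g t) (S : Set α) :
    ν.withDensity f S ≤ c * ν.withDensity g S + ν.withDensity f B :=
  calc ν.withDensity f S ≤ ν.withDensity f (S ∩ B) + ν.withDensity f (S \ B) :=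
        measure_le_inter_add_sdiff _ S B
    _ ≤ ν.withDensity f B + c * ν.withDensity g S := by
        gcongr
        · exact inter_subset_right
        · exact (withDensity_apply_le_mul_of_forall_le hg fun t ht ↦ h t ht.2).trans
            (by gcongr; exact sdiff_subset)
    _ = c * ν.withDensity g S + ν.withDensity f B := add_comm _ _

end WithDensity

namespace ProbabilityTheory

variable {v : ℝ≥0}

lemma gaussianPDFReal_eq_exp_mul_gaussianPDFReal (μ μ' : ℝ) (v : ℝ≥0) (t : ℝ) :
    gaussianPDFReal μ v t =
      rexp (((μ - μ') * (t - μ) + (μ - μ') ^ 2 / 2) / v) * gaussianPDFReal μ' v t := by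
  simp only [gaussianPDFReal, mul_left_comm _ (√(2 * π * v))⁻¹, ← exp_add]
  congr 2
  ring

lemma gaussianPDF_le_exp_mul_gaussianPDF (hv : v ≠ 0) {μ μ' t r : ℝ}
    (h : (μ - μ') * (t - μ) + (μ - μ') ^ 2 / 2 ≤ r * v) :
    gaussianPDF μ v t ≤ ENNReal.ofReal (rexp r) * gaussianPDF μ' v t := by
  rw [gaussianPDF, gaussianPDF, ← ENNReal.ofReal_mul (exp_pos r).le,
    gaussianPDFReal_eq_exp_mul_gaussianPDFReal μ μ']
  refine ENNReal.ofReal_le_ofReal (mul_le_mul_of_nonneg_right (exp_le_exp.2 ?_)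
    (gaussianPDFReal_nonneg _ _ _))
  rwa [div_le_iff₀ (by positivity)]

lemma gaussianReal_Ici_self (μ : ℝ) (hv : v ≠ 0) : gaussianReal μ v (Ici μ) = 2⁻¹ := by
  have := nullSingletonClass_gaussianReal (μ := μ) hv
  have hsymm : gaussianReal μ v (Iio μ) = gaussianReal μ v (Ici μ) := by
    have hmap := gaussianReal_map_const_sub (μ := μ) (v := v) (2 * μ)
    rw [show 2 * μ - μ = μ by ring] at hmap
    conv_rhs => rw [← hmap, Measure.map_apply (by fun_prop) measurableSet_Ici]
    have hpre : (2 * μ - ·) ⁻¹' Ici μ = Iic μ := by ext t; simp [two_mul]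
    rw [hpre]
    exact measure_congr Iio_ae_eq_Iic
  have hsum := prob_add_prob_compl (μ := gaussianReal μ v) (measurableSet_Ici (a := μ))
  rw [compl_Ici, hsymm, ← two_mul, mul_comm] at hsum
  exact ENNReal.eq_inv_of_mul_eq_one_left hsum

lemma gaussianReal_Ici_le_exp (hv : v ≠ 0) {c : ℝ} (hc : 0 ≤ c) :
    gaussianReal 0 v (Ici c) ≤ ENNReal.ofReal (rexp (-c ^ 2 / (2 * v)) / 2) :=
  calc gaussianReal 0 v (Ici c)
      ≤ ENNReal.ofReal (rexp (-c ^ 2 / (2 * v))) * gaussianReal c v (Ici c) := by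
        rw [gaussianReal_of_var_ne_zero 0 hv, gaussianReal_of_var_ne_zero c hv]
        refine withDensity_apply_le_mul_of_forall_le (measurable_gaussianPDF c v) fun t ht ↦ ?_
        refine gaussianPDF_le_exp_mul_gaussianPDF hv ?_
        rw [mem_Ici] at ht
        field_simp
        nlinarith
    _ = ENNReal.ofReal (rexp (-c ^ 2 / (2 * v)) / 2) := by
        rw [gaussianReal_Ici_self c hv, ENNReal.ofReal_div_of_pos two_pos, ENNReal.ofReal_ofNat]
        exact (div_eq_mul_inv _ _).symm

lemma gaussianReal_le_volume_mul (μ : ℝ) (hv : v ≠ 0) (s : Set ℝ) :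
    gaussianReal μ v s ≤ volume s * ENNReal.ofReal (√(2 * π * v))⁻¹ := by
  rw [gaussianReal_apply μ hv, mul_comm, ← setLIntegral_const]
  refine setLIntegral_mono measurable_const fun t _ ↦ ENNReal.ofReal_le_ofReal ?_
  refine mul_le_of_le_one_right (by positivity) (exp_le_one_iff.2 ?_)
  exact div_nonpos_of_nonpos_of_nonneg (neg_nonpos.2 (sq_nonneg _)) (by positivity)

lemma gaussianReal_Ici_sub_sqrt_le (μ : ℝ) (hv : v ≠ 0) :
    gaussianReal μ v (Ici (μ - √v)) ≤ ENNReal.ofReal (9 / 10) := by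
  have hpi : 5 / 2 ≤ √(2 * π) := by
    rw [le_sqrt (by norm_num) (by positivity)]
    linarith [pi_gt_d2]
  calc gaussianReal μ v (Ici (μ - √v))
      ≤ gaussianReal μ v (Ico (μ - √v) μ) + gaussianReal μ v (Ici μ) := by
        rw [← Ico_union_Ici_eq_Ici (by linarith [sqrt_nonneg v] : μ - √v ≤ μ)]
        exact measure_union_le _ _
    _ ≤ ENNReal.ofReal (2 / 5) + ENNReal.ofReal (1 / 2) := by
        rw [gaussianReal_Ici_self μ hv, one_div, ENNReal.ofReal_inv_of_pos two_pos,
          ENNReal.ofReal_ofNat]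
        gcongr
        refine (gaussianReal_le_volume_mul μ hv _).trans ?_
        rw [Real.volume_Ico, sub_sub_cancel, ← ENNReal.ofReal_mul (sqrt_nonneg _)]
        refine ENNReal.ofReal_le_ofReal ?_
        rw [sqrt_mul (by positivity), mul_inv, mul_left_comm, mul_inv_cancel₀ (by positivity),
          mul_one, inv_le_comm₀ (by positivity) (by norm_num)]
        linarith
    _ = ENNReal.ofReal (9 / 10) := by
        rw [← ENNReal.ofReal_add (by norm_num) (by norm_num)]
        norm_num

lemma gaussianReal_setOf_lt_mul_sub (μ a c : ℝ) (v : ℝ≥0) :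
    gaussianReal μ v {t | c < a * (t - μ)} =
      gaussianReal 0 (.mk (a ^ 2) (sq_nonneg a) * v) (Ioi c) := by
  have hmap : (gaussianReal μ v).map (fun t ↦ a * (t - μ)) =
      gaussianReal 0 (.mk (a ^ 2) (sq_nonneg a) * v) := by
    rw [show (fun t ↦ a * (t - μ)) = (a * ·) ∘ (· - μ) from rfl,
      ← Measure.map_map (by fun_prop) (by fun_prop), gaussianReal_map_sub_const,
      gaussianReal_map_const_mul, sub_self, mul_zero]
  rw [← hmap, Measure.map_apply (by fun_prop) measurableSet_Ioi]
  rfl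

end ProbabilityTheory

lemma NNReal.mk_sq_mul_ne_zero {a : ℝ} {v : ℝ≥0} (ha : a ≠ 0) (hv : v ≠ 0) :
    (.mk (a ^ 2) (sq_nonneg a) * v : ℝ≥0) ≠ 0 :=
  mul_ne_zero (by simpa [← NNReal.coe_inj]) hv

lemma sq_mul_le_of_abs_le_of_mul_sqrt_div_le {a Δ ε σ r : ℝ} (ha : |a| ≤ Δ) (hε : 0 < ε)
    (hσ : Δ * √r / ε ≤ σ) : a ^ 2 * r ≤ ε ^ 2 * σ ^ 2 := by
  have hle : |a| * √r ≤ ε * σ := by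
    rw [div_le_iff₀ hε] at hσ
    nlinarith [sqrt_nonneg r]
  calc a ^ 2 * r ≤ a ^ 2 * √r ^ 2 := by gcongr; rw [sq_sqrt']; exact le_max_left r 0
    _ = (|a| * √r) ^ 2 := by rw [mul_pow, sq_abs]
    _ ≤ (ε * σ) ^ 2 := pow_le_pow_left₀ (by positivity) hle 2
    _ = ε ^ 2 * σ ^ 2 := mul_pow ε σ 2

lemma exp_half_le_five_div_two : rexp (1 / 2) ≤ 5 / 2 := by
  rw [exp_half, sqrt_le_left (by norm_num)]
  linarith [exp_one_lt_three]

lemma exp_neg_sq_div_le_of_sq_mul_log_le {a ε δ v : ℝ} (ha : a ≠ 0) (hv : 0 < v) (hε : ε ≤ 1)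
    (hδ : 0 < δ) (h : a ^ 2 * (2 * log (1.25 / δ)) ≤ ε ^ 2 * v) :
    rexp (-(ε * v - a ^ 2 / 2) ^ 2 / (2 * (a ^ 2 * v))) / 2 ≤ δ := by
  have hexponent : -(ε * v - a ^ 2 / 2) ^ 2 / (2 * (a ^ 2 * v)) ≤ ε / 2 - log (1.25 / δ) := by
    rw [div_le_iff₀ (by positivity)]
    nlinarith [mul_le_mul_of_nonneg_left h hv.le, sq_nonneg (a ^ 2)]
  calc rexp (-(ε * v - a ^ 2 / 2) ^ 2 / (2 * (a ^ 2 * v))) / 2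
      ≤ rexp (ε / 2 - log (1.25 / δ)) / 2 := by gcongr
    _ = rexp (ε / 2) * (2 / 5) * δ := by
        rw [exp_sub, exp_log (by positivity)]
        field_simp
        norm_num
    _ ≤ 5 / 2 * (2 / 5) * δ := by
        gcongr
        exact (exp_le_exp.2 (by linarith)).trans exp_half_le_five_div_two
    _ = δ := by ring

lemma gaussianReal_Ici_le_of_sq_mul_log_le_of_neg {a ε δ : ℝ} {v : ℝ≥0} (ha : a ≠ 0) (hv : v ≠ 0)
    (hε : ε ∈ Ioo 0 1) (hδ : 0 < δ) (hδ1 : δ < 1)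
    (h : a ^ 2 * (2 * log (1.25 / δ)) ≤ ε ^ 2 * v) (hc : ε * v - a ^ 2 / 2 < 0) :
    gaussianReal 0 (.mk (a ^ 2) (sq_nonneg a) * v) (Ici (ε * v - a ^ 2 / 2)) ≤
      ENNReal.ofReal δ := by
  obtain ⟨hε0, hε1⟩ := hε
  have hv' : (0 : ℝ) < v := by positivity
  have ha2 : 0 < a ^ 2 := by positivity
  have hlog : 1 / 5 < log (1.25 / δ) := by
    have := one_sub_inv_le_log_of_pos (by positivity : 0 < 1.25 / δ)
    rw [inv_div] at this
    norm_num at this ⊢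
    linarith
  have hlog4 : 4 * log (1.25 / δ) < ε := by nlinarith [mul_pos hε0 hv']
  have hδ_ge : 9 / 10 ≤ δ := by
    have hexp : rexp (-log (1.25 / δ)) = δ / 1.25 := by
      rw [exp_neg, exp_log (by positivity), inv_div]
    have := add_one_le_exp (-log (1.25 / δ))
    rw [hexp] at this
    norm_num at this
    linarith
  have hthr : -√(a ^ 2 * v) ≤ ε * v - a ^ 2 / 2 := by
    have ha4 : a ^ 2 ≤ 4 * v := by
      nlinarith [mul_lt_mul_of_pos_left hlog ha2]
    have : a ^ 2 / 2 ≤ √(a ^ 2 * v) := by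
      rw [le_sqrt (by positivity) (by positivity)]
      nlinarith [mul_le_mul_of_nonneg_left ha4 (sq_nonneg a)]
    nlinarith
  calc _ ≤ gaussianReal 0 _ (Ici (0 - √(.mk (a ^ 2) (sq_nonneg a) * v : ℝ≥0))) :=
        measure_mono (Ici_subset_Ici.2 (by simpa using hthr))
    _ ≤ ENNReal.ofReal (9 / 10) := gaussianReal_Ici_sub_sqrt_le 0 (NNReal.mk_sq_mul_ne_zero ha hv)
    _ ≤ ENNReal.ofReal δ := ENNReal.ofReal_le_ofReal hδ_ge

lemma gaussianReal_Ioi_le_of_sq_mul_log_le {a ε δ : ℝ} {v : ℝ≥0} (hv : v ≠ 0)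
    (hε : ε ∈ Ioo 0 1) (hδ : 0 < δ) (h : a ^ 2 * (2 * log (1.25 / δ)) ≤ ε ^ 2 * v) :
    gaussianReal 0 (.mk (a ^ 2) (sq_nonneg a) * v) (Ioi (ε * v - a ^ 2 / 2)) ≤
      ENNReal.ofReal δ := by
  rcases eq_or_ne a 0 with rfl | ha
  · have hεv : 0 < ε * v := mul_pos hε.1 (by positivity)
    simp [gaussianReal_zero_var, not_lt.2 hεv.le]
  refine (measure_mono Ioi_subset_Ici_self).trans ?_
  rcases le_or_gt 0 (ε * v - a ^ 2 / 2) with hc | hc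
  · refine (gaussianReal_Ici_le_exp (NNReal.mk_sq_mul_ne_zero ha hv) hc).trans
      (ENNReal.ofReal_le_ofReal ?_)
    exact exp_neg_sq_div_le_of_sq_mul_log_le ha (by positivity) hε.2.le hδ h
  rcases le_or_gt 1 δ with hδ1 | hδ1
  · exact prob_le_one.trans (ENNReal.one_le_ofReal.2 hδ1)
  · exact gaussianReal_Ici_le_of_sq_mul_log_le_of_neg ha hv hε hδ hδ1 h hc

/-- The one-dimensional Gaussian mechanism `M(x) = f(x) + N(0, σ²)` (whose output
distribution is `N(f(x), σ²)`), for a function `f` of sensitivity at most `Δ`, is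
`(ε, δ)`-DP whenever `ε ∈ (0,1)` and `σ ≥ Δ·√(2·ln(1.25/δ))/ε`. -/
theorem gaussian_mechanism {X : Type*} (f : X → ℝ) (Δ ε δ σ : ℝ)
    (hΔ : ∀ x x' : X, |f x - f x'| ≤ Δ)
    (hε : ε ∈ Set.Ioo (0 : ℝ) 1) (hδ : 0 < δ) (hσpos : 0 < σ)
    (hσ : Δ * Real.sqrt (2 * Real.log (1.25 / δ)) / ε ≤ σ) :
    ∀ x x' : X, ∀ S : Set ℝ, MeasurableSet S →
      gaussianReal (f x) (⟨σ ^ 2, sq_nonneg σ⟩ : ℝ≥0) S ≤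
        ENNReal.ofReal (Real.exp ε) * gaussianReal (f x') (⟨σ ^ 2, sq_nonneg σ⟩ : ℝ≥0) S +
          ENNReal.ofReal δ := by
  intro x x' S _
  set v : ℝ≥0 := ⟨σ ^ 2, sq_nonneg σ⟩
  have hv : v ≠ 0 := by
    rw [ne_eq, ← NNReal.coe_eq_zero]
    exact pow_ne_zero 2 hσpos.ne'
  set a := f x - f x'
  have hsens : a ^ 2 * (2 * log (1.25 / δ)) ≤ ε ^ 2 * v :=
    sq_mul_le_of_abs_le_of_mul_sqrt_div_le (hΔ x x') hε.1 hσ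
  calc gaussianReal (f x) v S
      ≤ ENNReal.ofReal (rexp ε) * gaussianReal (f x') v S +
          gaussianReal (f x) v {t | ε * v - a ^ 2 / 2 < a * (t - f x)} := by
        rw [gaussianReal_of_var_ne_zero _ hv, gaussianReal_of_var_ne_zero _ hv]
        refine withDensity_apply_le_mul_add_of_forall_notMem_le (measurable_gaussianPDF _ _)
          (fun t ht ↦ gaussianPDF_le_exp_mul_gaussianPDF hv ?_) S
        have : a * (t - f x) ≤ ε * v - a ^ 2 / 2 := not_lt.1 ht
        linarith
    _ ≤ ENNReal.ofReal (rexp ε) * gaussianReal (f x') v S + ENNReal.ofReal δ := by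
        gcongr
        rw [gaussianReal_setOf_lt_mul_sub]
        exact gaussianReal_Ioi_le_of_sq_mul_log_le hv hε hδ hsens
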